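/- arXiv:1709.04389 — 3 statements merged into one kernel-verified Lean document; each statement's English description precedes it below -/
import Mathlib

section
/- Let p₁,…,p_K be positive reals summing to 1, let v₁,…,v_K be positive definite symmetric p×p real matrices and s₁,…,s_K be arbitrary p×p real matrices. Define s = Σ_k p_k s_k, v = Σ_k p_k v_k, j_cd = Σ_k p_k s_kᵀ v_k⁻¹ s_k, and j = sᵀ v⁻¹ s. Then j_cd - j is positive semidefinite (i.e., j_cd ⪰ j in the Loewner order). -/
/-!
Each block matrix `[[v_k, s_k], [s_kᴴ, s_kᴴ v_k⁻¹ s_k]]` is positive semidefinite, since its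
Schur complement with respect to the invertible block `v_k` vanishes. A nonnegative combination of
these blocks is again positive semidefinite, and it is the block matrix `[[v, s], [sᴴ, j_cd]]`,
whose Schur complement with respect to `v` is `j_cd - sᴴ v⁻¹ s`.
-/

open Matrix Finset
open scoped ComplexOrder

namespace Matrix

variable {ι m n : Type*}

lemma sum_fromBlocks {α : Type*} [AddCommMonoid α] (t : Finset ι) (A : ι → Matrix m m α)
    (B : ι → Matrix m n α) (C : ι → Matrix n m α) (D : ι → Matrix n n α) :
    ∑ i ∈ t, fromBlocks (A i) (B i) (C i) (D i) =
      fromBlocks (∑ i ∈ t, A i) (∑ i ∈ t, B i) (∑ i ∈ t, C i) (∑ i ∈ t, D i) := by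
  ext (i | i) (j | j) <;> simp [Matrix.sum_apply]

variable {𝕜 : Type*} [RCLike 𝕜] [Fintype m] [DecidableEq m] [Fintype n]

lemma PosDef.posSemidef_fromBlocks_conjTranspose_mul_inv_mul {A : Matrix m m 𝕜} (hA : A.PosDef)
    (B : Matrix m n 𝕜) : (fromBlocks A B Bᴴ (Bᴴ * A⁻¹ * B)).PosSemidef := by
  have := hA.isUnit.invertible
  exact (hA.fromBlocks₁₁ B _).mpr (by simpa using PosSemidef.zero)

theorem PosSemidef.sum_smul_conjTranspose_mul_inv_mul_sub {t : Finset ι} {w : ι → ℝ}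
    (hw : ∀ i ∈ t, 0 ≤ w i) {A : ι → Matrix m m 𝕜} (hA : ∀ i ∈ t, (A i).PosDef)
    (B : ι → Matrix m n 𝕜) (hAw : (∑ i ∈ t, w i • A i).PosDef) :
    (∑ i ∈ t, w i • ((B i)ᴴ * (A i)⁻¹ * B i) -
      (∑ i ∈ t, w i • B i)ᴴ * (∑ i ∈ t, w i • A i)⁻¹ * (∑ i ∈ t, w i • B i)).PosSemidef := by
  have := hAw.isUnit.invertible
  have hblocks :
      (∑ i ∈ t, w i • fromBlocks (A i) (B i) (B i)ᴴ ((B i)ᴴ * (A i)⁻¹ * B i)).PosSemidef :=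
    posSemidef_sum t fun i hi =>
      ((hA i hi).posSemidef_fromBlocks_conjTranspose_mul_inv_mul (B i)).smul (hw i hi)
  simp only [fromBlocks_smul, sum_fromBlocks] at hblocks
  rw [← hAw.fromBlocks₁₁]
  simpa [conjTranspose_sum, conjTranspose_smul] using hblocks

end Matrix

theorem godambe_info_inequality {p K : ℕ}
    (w : Fin K → ℝ) (hw : ∀ k, 0 < w k) (hsum : ∑ k, w k = 1)
    (v s : Fin K → Matrix (Fin p) (Fin p) ℝ)
    (hv : ∀ k, (v k).PosDef) :
    ((∑ k, w k • ((s k)ᵀ * (v k)⁻¹ * s k)) -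
      (∑ k, w k • s k)ᵀ * (∑ k, w k • v k)⁻¹ * (∑ k, w k • s k)).PosSemidef := by
  have hK : (univ : Finset (Fin K)).Nonempty :=
    nonempty_of_sum_ne_zero (hsum ▸ one_ne_zero)
  have hvw : (∑ k, w k • v k).PosDef :=
    posDef_sum hK fun k _ => (hv k).smul (hw k)
  simpa only [conjTranspose_eq_transpose_of_trivial] using
    PosSemidef.sum_smul_conjTranspose_mul_inv_mul_sub (fun k _ => (hw k).le) (fun k _ => hv k) s hvw
end

section
/- Let A₁, A₂ be real n×p matrices and B₁, B₂ be positive definite symmetric n×n real matrices, and let t ∈ [0,1]. Then (t A₁ + (1-t) A₂)ᵀ (t B₁ + (1-t) B₂)⁻¹ (t A₁ + (1-t) A₂) ⪯ t A₁ᵀ B₁⁻¹ A₁ + (1-t) A₂ᵀ B₂⁻¹ A₂ in the Loewner order. -/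
/-!
By the Schur complement criterion, for `B` positive definite the block matrix
`[[B, A], [Aᴴ, D]]` is positive semidefinite iff `D - Aᴴ B⁻¹ A` is. Hence the block matrices
with `D = Aᴴ B⁻¹ A` are positive semidefinite; a convex combination of two of them is again
positive semidefinite, and since the block matrix is linear in `(A, B, D)`, the criterion applied
to the combination gives the inequality.
-/

open Matrix
open scoped ComplexOrder

namespace Matrix

variable {m n 𝕜 : Type*} [RCLike 𝕜]

theorem convex_setOf_posDef : Convex ℝ {M : Matrix n n 𝕜 | M.PosDef} := by
  intro M₁ hM₁ M₂ hM₂ a b ha hb hab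
  rcases ha.lt_or_eq with ha | rfl
  · exact (hM₁.smul ha).add_posSemidef (hM₂.posSemidef.smul hb)
  · obtain rfl : b = 1 := by rwa [zero_add] at hab
    simpa using hM₂

variable [Fintype m] [Fintype n] [DecidableEq n]

theorem PosDef.posSemidef_fromBlocks_inv {B : Matrix n n 𝕜} (hB : B.PosDef) (A : Matrix n m 𝕜) :
    (fromBlocks B A Aᴴ (Aᴴ * B⁻¹ * A)).PosSemidef := by
  have := hB.isUnit.invertible
  rw [hB.fromBlocks₁₁, sub_self]
  exact .zero

theorem posSemidef_convexComb_sub_conjTranspose_mul_inv_mul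
    (A₁ A₂ : Matrix n m 𝕜) {B₁ B₂ : Matrix n n 𝕜} (hB₁ : B₁.PosDef) (hB₂ : B₂.PosDef)
    {t : ℝ} (ht₀ : 0 ≤ t) (ht₁ : t ≤ 1) :
    ((t • (A₁ᴴ * B₁⁻¹ * A₁) + (1 - t) • (A₂ᴴ * B₂⁻¹ * A₂)) -
      (t • A₁ + (1 - t) • A₂)ᴴ * (t • B₁ + (1 - t) • B₂)⁻¹ *
        (t • A₁ + (1 - t) • A₂)).PosSemidef := by
  have ht₁' : 0 ≤ 1 - t := sub_nonneg.2 ht₁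
  have hB : (t • B₁ + (1 - t) • B₂).PosDef :=
    convex_setOf_posDef hB₁ hB₂ ht₀ ht₁' (add_sub_cancel t 1)
  have := hB.isUnit.invertible
  have hblocks := ((hB₁.posSemidef_fromBlocks_inv A₁).smul ht₀).add
    ((hB₂.posSemidef_fromBlocks_inv A₂).smul ht₁')
  rw [fromBlocks_smul, fromBlocks_smul, fromBlocks_add] at hblocks
  rw [← hB.fromBlocks₁₁]
  simpa only [conjTranspose_add, conjTranspose_smul, star_trivial] using hblocks

end Matrix

theorem sandwich_jointly_convex {n p : ℕ}
    (A₁ A₂ : Matrix (Fin n) (Fin p) ℝ) (B₁ B₂ : Matrix (Fin n) (Fin n) ℝ)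
    (hB₁ : B₁.PosDef) (hB₂ : B₂.PosDef)
    (t : ℝ) (ht : t ∈ Set.Icc (0 : ℝ) 1) :
    ((t • (A₁ᵀ * B₁⁻¹ * A₁) + (1 - t) • (A₂ᵀ * B₂⁻¹ * A₂)) -
      (t • A₁ + (1 - t) • A₂)ᵀ * (t • B₁ + (1 - t) • B₂)⁻¹ *
        (t • A₁ + (1 - t) • A₂)).PosSemidef := by
  simpa only [conjTranspose_eq_transpose_of_trivial] using
    posSemidef_convexComb_sub_conjTranspose_mul_inv_mul A₁ A₂ hB₁ hB₂ ht.1 ht.2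
end

section
/- Let G be a real q×p matrix of rank p (q ≥ p), V a positive definite symmetric q×q matrix, and C a symmetric q×q matrix such that Gᵀ C G is invertible. Then the sandwich matrix (Gᵀ C G)⁻¹ (Gᵀ C V C G) (Gᵀ C G)⁻¹ ⪰ (Gᵀ V⁻¹ G)⁻¹ in the Loewner order, with equality when C = V⁻¹. -/
/-!
Any left inverse `A` of `G` gives an unbiased linear estimator with variance `A V Aᵀ`; the sandwich
matrix is the one of `A = (Gᵀ C G)⁻¹ Gᵀ C`. The generalized least squares left inverse
`B = (Gᵀ V⁻¹ G)⁻¹ Gᵀ V⁻¹` satisfies `A V Bᵀ = (Gᵀ V⁻¹ G)⁻¹ = B V Bᵀ` for every such `A`, so the cross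
terms in `(A - B) V (A - B)ᵀ` cancel and `A V Aᵀ - B V Bᵀ = (A - B) V (A - B)ᵀ ⪰ 0`.
-/

open Matrix

namespace Matrix

variable {m n R : Type*}

theorem mulVec_injective_of_isUnit_mul [Fintype m] [Fintype n] [Semiring R] [DecidableEq n]
    {A : Matrix n m R} {B : Matrix m n R} (h : IsUnit (A * B)) : Function.Injective B.mulVec := by
  refine Function.Injective.of_comp (f := A.mulVec) ?_
  simpa only [Function.comp_def, mulVec_mulVec] using mulVec_injective_of_isUnit h

theorem isSymm_transpose_mul_mul [Fintype m] [CommSemiring R] {C : Matrix m m R}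
    (B : Matrix m n R) (hC : C.IsSymm) : (Bᵀ * C * B).IsSymm := by
  simp only [IsSymm, transpose_mul, transpose_transpose, hC.eq, Matrix.mul_assoc]

theorem PosSemidef.mul_mul_conjTranspose_sub_of_mul_mul_conjTranspose_eq [Fintype m]
    [Fintype n] [Ring R] [PartialOrder R] [StarRing R] {V : Matrix n n R} (hV : V.PosSemidef)
    {A B : Matrix m n R}
    (h : A * V * Bᴴ = B * V * Bᴴ) : (A * V * Aᴴ - B * V * Bᴴ).PosSemidef := by
  have h' : B * V * Aᴴ = B * V * Bᴴ := by
    simpa [Matrix.mul_assoc, hV.isHermitian.eq] using congrArg (·ᴴ) h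
  have hpyth : (A - B) * V * (A - B)ᴴ = A * V * Aᴴ - B * V * Bᴴ := by
    simp only [conjTranspose_sub, Matrix.sub_mul, Matrix.mul_sub, h, h']
    abel
  exact hpyth ▸ hV.mul_mul_conjTranspose_same (A - B)

theorem PosDef.mul_mul_conjTranspose_sub_inv_of_mul_eq_one [Fintype m] [Fintype n] [Field R]
    [PartialOrder R] [StarRing R] [DecidableEq m] [DecidableEq n] {V : Matrix n n R}
    (hV : V.PosDef) {G : Matrix n m R} (hG : Function.Injective G.mulVec) {A : Matrix m n R}
    (hAG : A * G = 1) : (A * V * Aᴴ - (Gᴴ * V⁻¹ * G)⁻¹).PosSemidef := by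
  set U := Gᴴ * V⁻¹ * G
  have hU : U.PosDef := hV.inv.conjTranspose_mul_mul_same hG
  have hUdet : IsUnit U.det := (isUnit_iff_isUnit_det U).mp hU.isUnit
  have hVdet : IsUnit V.det := (isUnit_iff_isUnit_det V).mp hV.isUnit
  set B := U⁻¹ * Gᴴ * V⁻¹
  have hBG : B * G = 1 := by
    simp only [B, Matrix.mul_assoc]
    rw [← Matrix.mul_assoc Gᴴ, nonsing_inv_mul _ hUdet]
  have hVBt : V * Bᴴ = G * U⁻¹ := by
    simp only [B, conjTranspose_mul, hV.inv.isHermitian.eq, hU.inv.isHermitian.eq,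
      conjTranspose_conjTranspose, Matrix.mul_assoc]
    rw [mul_nonsing_inv_cancel_left _ _ hVdet]
  have cross_eq : ∀ {A' : Matrix m n R}, A' * G = 1 → A' * V * Bᴴ = U⁻¹ := fun hA'G => by
    rw [Matrix.mul_assoc, hVBt, ← Matrix.mul_assoc, hA'G, Matrix.one_mul]
  have hBVB : B * V * Bᴴ = U⁻¹ := cross_eq hBG
  simpa only [hBVB] using
    hV.posSemidef.mul_mul_conjTranspose_sub_of_mul_mul_conjTranspose_eq
      ((cross_eq hAG).trans hBVB.symm)

end Matrix

theorem gmm_optimal_weighting_general {q p : ℕ}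
    (G : Matrix (Fin q) (Fin p) ℝ)
    (V : Matrix (Fin q) (Fin q) ℝ) (hV : V.PosDef)
    (C : Matrix (Fin q) (Fin q) ℝ) (hC : C.IsSymm)
    (hinv : IsUnit (Gᵀ * C * G)) :
    (((Gᵀ * C * G)⁻¹ * (Gᵀ * C * V * C * G) * (Gᵀ * C * G)⁻¹) -
        (Gᵀ * V⁻¹ * G)⁻¹).PosSemidef ∧
    (C = V⁻¹ →
      (Gᵀ * C * G)⁻¹ * (Gᵀ * C * V * C * G) * (Gᵀ * C * G)⁻¹ =
        (Gᵀ * V⁻¹ * G)⁻¹) := by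
  set W := Gᵀ * C * G
  have hWdet : IsUnit W.det := (isUnit_iff_isUnit_det W).mp hinv
  set A := W⁻¹ * Gᵀ * C
  have hAG : A * G = 1 := by
    rw [Matrix.mul_assoc, Matrix.mul_assoc, ← Matrix.mul_assoc Gᵀ, nonsing_inv_mul _ hWdet]
  have hAVA : A * V * Aᵀ = W⁻¹ * (Gᵀ * C * V * C * G) * W⁻¹ := by
    have hWinv : W⁻¹ᵀ = W⁻¹ := (isSymm_transpose_mul_mul G hC).inv.eq
    simp only [A, transpose_mul, hC.eq, hWinv, transpose_transpose, Matrix.mul_assoc]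
  refine ⟨?_, ?_⟩
  · simpa only [conjTranspose_eq_transpose_of_trivial, hAVA] using
      hV.mul_mul_conjTranspose_sub_inv_of_mul_eq_one (mulVec_injective_of_isUnit_mul hinv) hAG
  · rintro rfl
    have hVdet : IsUnit V.det := (isUnit_iff_isUnit_det V).mp hV.isUnit
    rw [Matrix.mul_assoc (Gᵀ * V⁻¹) V, mul_nonsing_inv _ hVdet, Matrix.mul_one,
      nonsing_inv_mul _ hWdet, Matrix.one_mul]

theorem gmm_optimal_weighting {q p : ℕ} (hqp : p ≤ q)
    (G : Matrix (Fin q) (Fin p) ℝ) (hG : G.rank = p)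
    (V : Matrix (Fin q) (Fin q) ℝ) (hV : V.PosDef)
    (C : Matrix (Fin q) (Fin q) ℝ) (hC : C.IsSymm)
    (hinv : IsUnit (Gᵀ * C * G)) :
    (((Gᵀ * C * G)⁻¹ * (Gᵀ * C * V * C * G) * (Gᵀ * C * G)⁻¹) -
        (Gᵀ * V⁻¹ * G)⁻¹).PosSemidef ∧
    (C = V⁻¹ →
      (Gᵀ * C * G)⁻¹ * (Gᵀ * C * V * C * G) * (Gᵀ * C * G)⁻¹ =
        (Gᵀ * V⁻¹ * G)⁻¹) :=
  gmm_optimal_weighting_general G V hV C hC hinv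
end
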